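/- Let p : Fin 4 → EuclideanSpace ℝ (Fin 3) and let C be the unit-weight coboundary matrix of the complete graph K₄ on Fin 4 (a 6 × 12 matrix: rows indexed by pairs (i,j) with i < j, the row of (i,j) having entries −(p j a − p i a) at columns (i,a), (p j a − p i a) at columns (j,a), and 0 elsewhere). Let r be the dimension of the linear span of the difference vectors { p j − p i : i ≠ j }. Then: (a) if r = 1, then rank C = 3 and the harmonic space of K₄ has dimension 9; (b) if r = 2, then rank C = 5 and the harmonic space has dimension 7; (c) if r = 3, then rank C = 6 and the harmonic space has dimension 6. -/

import Mathlib

set_option synthInstance.maxHeartbeats 1000000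
set_option maxHeartbeats 4000000

open scoped RealInnerProductSpace

/-- The harmonic space (global section space of the anisotropic sheaf / kernel of the
ANM Hessian) of a simple graph `G` with positions `p`. -/
def Harm {V : Type*} (G : SimpleGraph V) (p : V → EuclideanSpace ℝ (Fin 3)) :
    Submodule ℝ (V → EuclideanSpace ℝ (Fin 3)) where
  carrier := {x | ∀ ⦃i j : V⦄, G.Adj i j → ⟪p j - p i, x j - x i⟫ = 0}
  add_mem' := by
    intro x y hx hy i j hij
    have h : (x + y) j - (x + y) i = (x j - x i) + (y j - y i) := by
      simp only [Pi.add_apply]; abel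
    rw [h, inner_add_right, hx hij, hy hij, add_zero]
  zero_mem' := by
    intro i j hij
    simp
  smul_mem' := by
    intro c x hx i j hij
    have h : (c • x) j - (c • x) i = c • (x j - x i) := by
      simp only [Pi.smul_apply, smul_sub]
    rw [h, inner_smul_right, hx hij, mul_zero]

open Matrix Module

noncomputable section K4Aux

def SkewN (n : ℕ) : Submodule ℝ (Matrix (Fin n) (Fin n) ℝ) where
  carrier := {M | ∀ i j, M j i = - M i j}
  add_mem' := by intro a b ha hb i j; simp [Matrix.add_apply, ha i j, hb i j]; ring
  zero_mem' := by intro i j; simp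
  smul_mem' := by intro c a ha i j; simp [Matrix.smul_apply, ha i j]

def skewEquivFun (n : ℕ) : SkewN n ≃ₗ[ℝ] ({e : Fin n × Fin n // e.1 < e.2} → ℝ) where
  toFun M := fun e => M.1 e.1.1 e.1.2
  map_add' M N := rfl
  map_smul' c M := rfl
  invFun c := ⟨Matrix.of fun i j =>
      if h : i < j then c ⟨(i, j), h⟩ else if h' : j < i then -c ⟨(j, i), h'⟩ else 0, by
    intro i j
    show (if h : j < i then _ else _) = -(if h : i < j then _ else _)
    rcases lt_trichotomy i j with h | h | h
    · rw [dif_neg (lt_asymm h), dif_pos h, dif_pos h]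
    · subst h; simp
    · rw [dif_pos h, dif_neg (lt_asymm h), dif_pos h, neg_neg]⟩
  left_inv M := by
    apply Subtype.ext
    funext i j
    show (if h : i < j then _ else _) = M.1 i j
    rcases lt_trichotomy i j with h | h | h
    · rw [dif_pos h]
    · subst h
      rw [dif_neg (lt_irrefl i), dif_neg (lt_irrefl i)]
      have := M.2 i i
      linarith
    · rw [dif_neg (lt_asymm h), dif_pos h]
      rw [M.2 j i]
  right_inv c := by
    funext e
    simp only [Matrix.of_apply, dif_pos e.2]

lemma finrank_SkewN (n : ℕ) :
    finrank ℝ (SkewN n) = Fintype.card {e : Fin n × Fin n // e.1 < e.2} := by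
  rw [LinearEquiv.finrank_eq (skewEquivFun n), finrank_pi]

variable (p : Fin 4 → EuclideanSpace ℝ (Fin 3))

def qv : Fin 4 → EuclideanSpace ℝ (Fin 3) := fun i => p i - p 0
lemma qv_zero : qv p 0 = 0 := sub_self _

def Gm : EuclideanSpace ℝ (Fin 3) →ₗ[ℝ] (Fin 4 → ℝ) where
  toFun w := fun i => ⟪qv p i, w⟫
  map_add' x y := by funext i; simp [inner_add_right]
  map_smul' c x := by funext i; simp [inner_smul_right]

def Usub : Submodule ℝ (Fin 4 → ℝ) := LinearMap.range (Gm p)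

def spanD : Submodule ℝ (EuclideanSpace ℝ (Fin 3)) :=
  Submodule.span ℝ {v : EuclideanSpace ℝ (Fin 3) | ∃ i j : Fin 4, i ≠ j ∧ v = p j - p i}

lemma ker_Gm : LinearMap.ker (Gm p) = (spanD p)ᗮ := by
  ext w
  rw [LinearMap.mem_ker, Submodule.mem_orthogonal, funext_iff]
  constructor
  · intro h u hu
    induction hu using Submodule.span_induction with
    | mem u hu =>
      obtain ⟨i, j, hij, rfl⟩ := hu
      have hq : p j - p i = qv p j - qv p i := by simp [qv]
      rw [hq, inner_sub_left]
      have hi := h i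
      have hj := h j
      simp only [Pi.zero_apply] at hi hj
      show ⟪qv p j, w⟫ - ⟪qv p i, w⟫ = 0
      rw [show ⟪qv p j, w⟫ = 0 from hj, show ⟪qv p i, w⟫ = 0 from hi]
      ring
    | zero => exact inner_zero_left w
    | add u v _ _ hu hv => rw [inner_add_left, hu, hv, add_zero]
    | smul c u _ hu => rw [inner_smul_left, hu, mul_zero]
  · intro h i
    show ⟪qv p i, w⟫ = 0
    by_cases hi : i = 0
    · subst hi; rw [qv_zero, inner_zero_left]
    · exact h (qv p i) (Submodule.subset_span ⟨0, i, Ne.symm hi, rfl⟩)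

lemma finrank_Usub : finrank ℝ (Usub p) = finrank ℝ (spanD p) := by
  have h1 := LinearMap.finrank_range_add_finrank_ker (Gm p)
  have h2 := Submodule.finrank_add_finrank_orthogonal (𝕜 := ℝ) (spanD p)
  rw [ker_Gm] at h1
  have h3 : finrank ℝ (EuclideanSpace ℝ (Fin 3)) = 3 := by
    simp [finrank_euclideanSpace]
  rw [h3] at h1 h2
  have h4 : finrank ℝ (Usub p) = finrank ℝ (LinearMap.range (Gm p)) := rfl
  omega

def Psub : Submodule ℝ (Matrix (Fin 4) (Fin 4) ℝ) where
  carrier := {M | (∀ i, M i 0 = 0) ∧ ∀ j, (fun i => M i j) ∈ Usub p}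
  add_mem' := by
    intro a b ha hb
    exact ⟨fun i => by simp [Matrix.add_apply, ha.1 i, hb.1 i],
      fun j => (Usub p).add_mem (ha.2 j) (hb.2 j)⟩
  zero_mem' := ⟨fun i => rfl, fun j => (Usub p).zero_mem⟩
  smul_mem' := by
    intro c a ha
    exact ⟨fun i => by simp [Matrix.smul_apply, ha.1 i],
      fun j => (Usub p).smul_mem c (ha.2 j)⟩

def PsubEquiv : Psub p ≃ₗ[ℝ] ({j : Fin 4 // j ≠ 0} → Usub p) where
  toFun M := fun j => ⟨fun i => M.1 i j.1, M.2.2 j.1⟩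
  invFun c := ⟨Matrix.of fun i j => if h : j = 0 then 0 else (c ⟨j, h⟩ : Fin 4 → ℝ) i, by
    constructor
    · intro i; simp
    · intro j
      by_cases hj : j = 0
      · subst hj
        simp only [Matrix.of_apply, dif_pos]
        exact (Usub p).zero_mem
      · simp only [Matrix.of_apply, dif_neg hj]
        exact (c ⟨j, hj⟩).2⟩
  map_add' M N := by funext j; apply Subtype.ext; rfl
  map_smul' c M := by funext j; apply Subtype.ext; rfl
  left_inv M := by
    apply Subtype.ext
    funext i j
    by_cases hj : j = 0
    · subst hj; simpa using (M.2.1 i).symm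
    · simp [hj]
  right_inv c := by
    funext j
    apply Subtype.ext
    funext i
    simp [j.2]

lemma finrank_Psub : finrank ℝ (Psub p) = 3 * finrank ℝ (Usub p) := by
  rw [LinearEquiv.finrank_eq (PsubEquiv p), finrank_pi_fintype, Finset.sum_const,
    Finset.card_univ]
  have h : Fintype.card {j : Fin 4 // j ≠ 0} = 3 := by decide
  rw [h, smul_eq_mul]

lemma mem_Usub_zero {c : Fin 4 → ℝ} (hc : c ∈ Usub p) : c 0 = 0 := by
  obtain ⟨w, rfl⟩ := hc
  show ⟪qv p 0, w⟫ = 0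
  rw [qv_zero, inner_zero_left]

def Bmap : (Fin 4 → EuclideanSpace ℝ (Fin 3)) →ₗ[ℝ] Matrix (Fin 4) (Fin 4) ℝ where
  toFun x := Matrix.of fun i j => ⟪qv p i, x j - x 0⟫
  map_add' x y := by
    funext i j
    have h : (x + y) j - (x + y) 0 = (x j - x 0) + (y j - y 0) := by
      simp only [Pi.add_apply]; abel
    simp only [Matrix.of_apply, Matrix.add_apply]
    rw [h, inner_add_right]
  map_smul' c x := by
    funext i j
    have h : (c • x) j - (c • x) 0 = c • (x j - x 0) := by
      simp only [Pi.smul_apply, smul_sub]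
    simp only [Matrix.of_apply, Matrix.smul_apply, RingHom.id_apply, smul_eq_mul]
    rw [h, inner_smul_right]

lemma range_Bmap : LinearMap.range (Bmap p) = Psub p := by
  apply le_antisymm
  · rintro - ⟨x, rfl⟩
    constructor
    · intro i; show ⟪qv p i, x 0 - x 0⟫ = 0; rw [sub_self, inner_zero_right]
    · intro j; exact ⟨x j - x 0, rfl⟩
  · rintro M ⟨h0, hcol⟩
    choose w hw using fun j => hcol j
    refine ⟨fun j => if j = 0 then 0 else w j, ?_⟩
    funext i j
    show ⟪qv p i, _ - _⟫ = M i j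
    dsimp only
    by_cases hj : j = 0
    · subst hj; simp [h0 i]
    · rw [if_neg hj, if_pos rfl, sub_zero]
      exact congrFun (hw j) i

lemma Bmap_apply (x : Fin 4 → EuclideanSpace ℝ (Fin 3)) (i j : Fin 4) :
    Bmap p x i j = ⟪qv p i, x j - x 0⟫ := rfl

lemma inner_expand (x : Fin 4 → EuclideanSpace ℝ (Fin 3)) (i j : Fin 4) :
    ⟪p j - p i, x j - x i⟫ =
      Bmap p x j j - Bmap p x j i - Bmap p x i j + Bmap p x i i := by
  have h1 : p j - p i = qv p j - qv p i := by simp [qv]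
  have h2 : x j - x i = (x j - x 0) - (x i - x 0) := by abel
  simp only [Bmap_apply, h1, h2, inner_sub_left, inner_sub_right]
  ring

lemma harm_eq_comap : Harm (⊤ : SimpleGraph (Fin 4)) p = (SkewN 4).comap (Bmap p) := by
  ext x
  constructor
  · intro hx
    intro i j
    have hz : ∀ k, Bmap p x k 0 = 0 := fun k => by
      rw [Bmap_apply, sub_self, inner_zero_right]
    have hz0 : ∀ k, Bmap p x 0 k = 0 := fun k => by
      rw [Bmap_apply, qv_zero, inner_zero_left]
    have hd : ∀ k, Bmap p x k k = 0 := by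
      intro k
      by_cases hk : k = 0
      · subst hk; exact hz 0
      · have h := hx (show (⊤ : SimpleGraph (Fin 4)).Adj 0 k by simpa using (Ne.symm hk))
        rw [inner_expand] at h
        rw [hz, hz0, hz0] at h
        linarith
    by_cases hij : i = j
    · subst hij; simp [hd i]
    · have h := hx (show (⊤ : SimpleGraph (Fin 4)).Adj i j by simpa using hij)
      rw [inner_expand] at h
      rw [hd, hd] at h
      linarith
  · intro hx
    intro i j hij
    have hS : ∀ a b, Bmap p x b a = - Bmap p x a b := hx
    have hd : ∀ k, Bmap p x k k = 0 := fun k => by have := hS k k; linarith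
    rw [inner_expand, hd, hd, hS i j]
    ring

lemma finrank_inf {d : ℕ} (hd : finrank ℝ (Usub p) = d) :
    finrank ℝ ((Psub p ⊓ SkewN 4 : Submodule ℝ (Matrix (Fin 4) (Fin 4) ℝ))) =
      finrank ℝ (SkewN d) := by
  classical
  set U := Usub p with hU
  let b : Basis (Fin d) ℝ U := Module.finBasisOfFinrankEq ℝ U hd
  set F : Matrix (Fin 4) (Fin d) ℝ := Matrix.of (fun i k => (b k : Fin 4 → ℝ) i) with hF
  -- mulVec F v is the coordinate combination of basis vectors
  have hFv : ∀ v : Fin d → ℝ, F.mulVec v = ((∑ k, v k • b k : U) : Fin 4 → ℝ) := by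
    intro v
    funext i
    simp only [Matrix.mulVec, dotProduct, hF, Matrix.of_apply]
    rw [Submodule.coe_sum]
    simp only [Finset.sum_apply, Submodule.coe_smul, Pi.smul_apply, smul_eq_mul]
    exact Finset.sum_congr rfl fun k _ => mul_comm _ _
  have hmem : ∀ c : Fin 4 → ℝ, c ∈ U ↔ ∃ v, F.mulVec v = c := by
    intro c
    constructor
    · intro hc
      refine ⟨b.repr ⟨c, hc⟩, ?_⟩
      rw [hFv]
      exact congrArg Subtype.val (b.sum_repr ⟨c, hc⟩)
    · rintro ⟨v, rfl⟩
      rw [hFv]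
      exact ((∑ k, v k • b k : U)).2
  -- injectivity of F
  have hker : LinearMap.ker (Matrix.toLin' F) = ⊥ := by
    rw [LinearMap.ker_eq_bot']
    intro v hv
    rw [Matrix.toLin'_apply, hFv] at hv
    have : (∑ k, v k • b k : U) = 0 := by
      apply Subtype.ext
      exact hv
    funext k
    exact linearIndependent_iff'.mp b.linearIndependent Finset.univ v
      (by simpa using this) k (Finset.mem_univ k)
  obtain ⟨g, hg⟩ := LinearMap.exists_leftInverse_of_injective _ hker
  set G : Matrix (Fin d) (Fin 4) ℝ := LinearMap.toMatrix' g with hGdef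
  have hGF : G * F = 1 := by
    have : LinearMap.toMatrix' (g ∘ₗ Matrix.toLin' F) = LinearMap.toMatrix' (LinearMap.id (M := Fin d → ℝ)) := by
      rw [hg]
    rwa [LinearMap.toMatrix'_comp, LinearMap.toMatrix'_toLin', LinearMap.toMatrix'_id] at this
  have hFG : Fᵀ * Gᵀ = 1 := by
    rw [← Matrix.transpose_mul, hGF, Matrix.transpose_one]
  -- the conjugation map
  let Ψ : Matrix (Fin d) (Fin d) ℝ →ₗ[ℝ] Matrix (Fin 4) (Fin 4) ℝ :=
    { toFun := fun N => F * N * Fᵀ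
      map_add' := fun N N' => by
        show F * (N + N') * Fᵀ = F * N * Fᵀ + F * N' * Fᵀ
        rw [Matrix.mul_add, Matrix.add_mul]
      map_smul' := fun c N => by
        show F * (c • N) * Fᵀ = c • (F * N * Fᵀ)
        rw [Matrix.mul_smul, Matrix.smul_mul] }
  have hΨ : ∀ N, Ψ N = F * N * Fᵀ := fun N => rfl
  have hcancel : ∀ N : Matrix (Fin d) (Fin d) ℝ, G * (F * N * Fᵀ) * Gᵀ = N := by
    intro N
    calc G * (F * N * Fᵀ) * Gᵀ = G * F * N * (Fᵀ * Gᵀ) := by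
          simp only [Matrix.mul_assoc]
      _ = N := by rw [hGF, hFG, Matrix.one_mul, Matrix.mul_one]
  have hΨinj : Function.Injective Ψ := by
    intro N N' h
    have h2 := congrArg (fun M => G * M * Gᵀ) h
    simpa only [hΨ, hcancel] using h2
  have hFGM : ∀ M : Matrix (Fin 4) (Fin 4) ℝ, (∀ j, (fun i => M i j) ∈ U) →
      F * G * M = M := by
    intro M hcols
    choose a ha using fun j => (hmem _).mp (hcols j)
    have hFA : F * (Matrix.of fun k j => a j k) = M := by
      ext i j
      simp only [Matrix.mul_apply, Matrix.of_apply]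
      exact (congrFun (ha j) i)
    rw [← hFA, ← Matrix.mul_assoc, Matrix.mul_assoc F G F, hGF, Matrix.mul_one]
  -- the image of the skew matrices is exactly P ⊓ S
  have hmap : Submodule.map Ψ (SkewN d) = Psub p ⊓ SkewN 4 := by
    apply le_antisymm
    · rintro - ⟨N, hN, rfl⟩
      rw [hΨ]
      have hNT : Nᵀ = -N := by
        ext i j
        simp only [Matrix.transpose_apply, Matrix.neg_apply]
        exact hN i j
      have hskew : (F * N * Fᵀ)ᵀ = -(F * N * Fᵀ) := by
        rw [Matrix.transpose_mul, Matrix.transpose_mul, Matrix.transpose_transpose, hNT]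
        rw [Matrix.neg_mul, Matrix.mul_neg, Matrix.mul_assoc]
      have hS : F * N * Fᵀ ∈ SkewN 4 := by
        intro i j
        have := congrFun (congrFun hskew i) j
        simpa using this
      have hcols : ∀ j, (fun i => (F * N * Fᵀ) i j) ∈ U := by
        intro j
        rw [hmem]
        refine ⟨fun k => (N * Fᵀ) k j, ?_⟩
        funext i
        simp only [Matrix.mulVec, dotProduct, Matrix.mul_apply, Finset.mul_sum,
          Finset.sum_mul]
        rw [Finset.sum_comm]
        exact Finset.sum_congr rfl fun k _ => Finset.sum_congr rfl fun x _ => by ring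
      refine ⟨⟨fun i => ?_, hcols⟩, hS⟩
      have h0 : (F * N * Fᵀ) 0 i = 0 := mem_Usub_zero p (hcols i)
      rw [hS 0 i, h0, neg_zero]
    · rintro M ⟨⟨h0, hcols⟩, hSk⟩
      have hMT : Mᵀ = -M := by
        ext i j
        simp only [Matrix.transpose_apply, Matrix.neg_apply]
        exact hSk i j
      have hcolsT : ∀ j, (fun i => Mᵀ i j) ∈ U := by
        intro j
        have : (fun i => Mᵀ i j) = -(fun i => M i j) := by
          funext i
          simp only [Matrix.transpose_apply, Pi.neg_apply]
          exact hSk i j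
        rw [this]
        exact neg_mem (hcols j)
      have h5 : F * G * M = M := hFGM M hcols
      have h6 : F * G * Mᵀ = Mᵀ := hFGM Mᵀ hcolsT
      refine ⟨G * M * Gᵀ, ?_, ?_⟩
      · -- skewness of G * M * Gᵀ
        intro i j
        have : (G * M * Gᵀ)ᵀ = -(G * M * Gᵀ) := by
          rw [Matrix.transpose_mul, Matrix.transpose_mul, Matrix.transpose_transpose, hMT]
          simp [Matrix.neg_mul, Matrix.mul_neg, Matrix.mul_assoc]
        have := congrFun (congrFun this i) j
        simpa using this
      · rw [hΨ]
        have h7 : M * Gᵀ * Fᵀ = M := by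
          have h := congrArg Matrix.transpose h6
          simp only [Matrix.transpose_mul, Matrix.transpose_transpose] at h
          rw [Matrix.mul_assoc]
          exact h
        calc F * (G * M * Gᵀ) * Fᵀ = (F * G * M) * Gᵀ * Fᵀ := by
              simp only [Matrix.mul_assoc]
          _ = M := by rw [h5, h7]
  rw [← hmap]
  exact (LinearEquiv.finrank_eq (Submodule.equivMapOfInjective Ψ hΨinj (SkewN d))).symm

noncomputable def unc : ((Fin 4 × Fin 3) → ℝ) ≃ₗ[ℝ] (Fin 4 → EuclideanSpace ℝ (Fin 3)) where
  toFun x := fun j => (WithLp.toLp 2 (fun a => x (j, a)) : EuclideanSpace ℝ (Fin 3))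
  invFun y := fun e => y e.1 e.2
  map_add' x y := rfl
  map_smul' c x := rfl
  left_inv x := rfl
  right_inv y := rfl

lemma rank_C_harm (p : Fin 4 → EuclideanSpace ℝ (Fin 3))
    (C : Matrix {e : Fin 4 × Fin 4 // e.1 < e.2} (Fin 4 × Fin 3) ℝ)
    (hC : ∀ (e : {e : Fin 4 × Fin 4 // e.1 < e.2}) (k : Fin 4) (a : Fin 3),
      C e (k, a) =
        if k = e.1.1 then -(p e.1.2 a - p e.1.1 a)
        else if k = e.1.2 then p e.1.2 a - p e.1.1 a
        else 0) :
    C.rank + finrank ℝ (Harm (⊤ : SimpleGraph (Fin 4)) p) = 12 := by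
  classical
  have key : ∀ (x : (Fin 4 × Fin 3) → ℝ) (e : {e : Fin 4 × Fin 4 // e.1 < e.2}),
      C.mulVec x e = ⟪p e.1.2 - p e.1.1, unc x e.1.2 - unc x e.1.1⟫ := by
    intro x e
    obtain ⟨⟨i, j⟩, hij⟩ := e
    have hne : i ≠ j := ne_of_lt hij
    have hCs : ∀ (k : Fin 4) (a : Fin 3), C ⟨(i, j), hij⟩ (k, a) =
        if k = i then -(p j a - p i a) else if k = j then p j a - p i a else 0 :=
      fun k a => hC ⟨(i, j), hij⟩ k a
    show (∑ ka : Fin 4 × Fin 3, C ⟨(i, j), hij⟩ ka * x ka) = _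
    rw [Fintype.sum_prod_type]
    have split : ∀ k : Fin 4, (∑ a : Fin 3, C ⟨(i, j), hij⟩ (k, a) * x (k, a)) =
        (if k = i then ∑ a : Fin 3, -(p j a - p i a) * x (k, a) else 0) +
        (if k = j then ∑ a : Fin 3, (p j a - p i a) * x (k, a) else 0) := by
      intro k
      by_cases hki : k = i
      · rw [if_pos hki, if_neg (by rw [hki]; exact hne), add_zero]
        refine Finset.sum_congr rfl fun a _ => ?_
        rw [hCs k a, if_pos hki]
      · by_cases hkj : k = j
        · rw [if_neg hki, if_pos hkj, zero_add]
          refine Finset.sum_congr rfl fun a _ => ?_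
          rw [hCs k a, if_neg hki, if_pos hkj]
        · rw [if_neg hki, if_neg hkj, add_zero]
          refine Finset.sum_eq_zero fun a _ => ?_
          rw [hCs k a, if_neg hki, if_neg hkj, zero_mul]
    rw [Finset.sum_congr rfl fun k _ => split k]
    rw [Finset.sum_add_distrib, Finset.sum_ite_eq' Finset.univ i, Finset.sum_ite_eq' Finset.univ j]
    rw [if_pos (Finset.mem_univ i), if_pos (Finset.mem_univ j)]
    have hinner : ⟪p j - p i, unc x j - unc x i⟫ =
        ∑ a : Fin 3, (p j a - p i a) * (x (j, a) - x (i, a)) := by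
      rw [PiLp.inner_apply]
      refine Finset.sum_congr rfl fun a _ => ?_
      rw [PiLp.sub_apply, PiLp.sub_apply, RCLike.inner_apply, conj_trivial]
      exact mul_comm _ _
    rw [hinner, ← Finset.sum_add_distrib]
    refine Finset.sum_congr rfl fun a _ => ?_
    ring
  have hker : LinearMap.ker C.mulVecLin =
      Submodule.comap (unc.toLinearMap) (Harm (⊤ : SimpleGraph (Fin 4)) p) := by
    ext x
    rw [LinearMap.mem_ker, Submodule.mem_comap]
    constructor
    · intro hx
      have hmv : C.mulVec x = 0 := hx
      intro i j hij
      have hne : i ≠ j := by simpa using hij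
      rcases lt_trichotomy i j with h | h | h
      · have h2 := key x ⟨(i, j), h⟩
        rw [hmv] at h2
        exact h2.symm
      · exact absurd h hne
      · have h2 := key x ⟨(j, i), h⟩
        rw [hmv] at h2
        have h3 : ⟪p i - p j, unc x i - unc x j⟫ = (0 : ℝ) := h2.symm
        have h4 : ⟪-(p i - p j), -(unc x i - unc x j)⟫ = (0 : ℝ) := by
          rw [inner_neg_neg]; exact h3
        have h5 : p j - p i = -(p i - p j) := by abel
        have h6 : unc x j - unc x i = -(unc x i - unc x j) := by abel
        show ⟪p j - p i, unc x j - unc x i⟫ = (0 : ℝ)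
        rw [h5, h6]
        exact h4
    · intro hx
      show C.mulVec x = 0
      funext e
      rw [key x e]
      have hne : e.1.1 ≠ e.1.2 := ne_of_lt e.2
      have hadj : (⊤ : SimpleGraph (Fin 4)).Adj e.1.1 e.1.2 := by
        simp only [SimpleGraph.top_adj]
        exact hne
      exact hx hadj
  have h1 := LinearMap.finrank_range_add_finrank_ker C.mulVecLin
  have hdom : finrank ℝ ((Fin 4 × Fin 3) → ℝ) = 12 := by
    rw [finrank_pi]
    simp
  rw [hdom, hker] at h1
  have h2 : finrank ℝ (Submodule.comap (unc.toLinearMap) (Harm (⊤ : SimpleGraph (Fin 4)) p)) =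
      finrank ℝ (Harm (⊤ : SimpleGraph (Fin 4)) p) := by
    rw [Submodule.comap_equiv_eq_map_symm]
    exact (LinearEquiv.finrank_eq
      (Submodule.equivMapOfInjective unc.symm.toLinearMap unc.symm.injective _)).symm
  rw [h2] at h1
  have hrank : C.rank = finrank ℝ (LinearMap.range C.mulVecLin) := rfl
  omega

end K4Aux

/-- Rank of the coboundary matrix of `K₄` and dimension of its harmonic space, according
to the rank `r` of the anisotropic sheaf (the dimension of the span of the difference
vectors `p j − p i`). -/
theorem K4_rank_cases (p : Fin 4 → EuclideanSpace ℝ (Fin 3))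
    (C : Matrix {e : Fin 4 × Fin 4 // e.1 < e.2} (Fin 4 × Fin 3) ℝ)
    (hC : ∀ (e : {e : Fin 4 × Fin 4 // e.1 < e.2}) (k : Fin 4) (a : Fin 3),
      C e (k, a) =
        if k = e.1.1 then -(p e.1.2 a - p e.1.1 a)
        else if k = e.1.2 then p e.1.2 a - p e.1.1 a
        else 0)
    (r : ℕ)
    (hr : r = Module.finrank ℝ (Submodule.span ℝ
      {v : EuclideanSpace ℝ (Fin 3) | ∃ i j : Fin 4, i ≠ j ∧ v = p j - p i})) :
    (r = 1 → C.rank = 3 ∧ Module.finrank ℝ (Harm (⊤ : SimpleGraph (Fin 4)) p) = 9) ∧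
    (r = 2 → C.rank = 5 ∧ Module.finrank ℝ (Harm (⊤ : SimpleGraph (Fin 4)) p) = 7) ∧
    (r = 3 → C.rank = 6 ∧ Module.finrank ℝ (Harm (⊤ : SimpleGraph (Fin 4)) p) = 6) := by
  classical
  have hU : finrank ℝ (Usub p) = r := (finrank_Usub p).trans hr.symm
  have hh : finrank ℝ (Harm (⊤ : SimpleGraph (Fin 4)) p) + finrank ℝ (Psub p) =
      12 + finrank ℝ (Psub p ⊓ SkewN 4 : Submodule ℝ (Matrix (Fin 4) (Fin 4) ℝ)) := by
    have hdom : finrank ℝ (Fin 4 → EuclideanSpace ℝ (Fin 3)) = 12 := by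
      rw [finrank_pi_fintype]
      simp [finrank_euclideanSpace]
    have h1 := LinearMap.finrank_range_add_finrank_ker ((SkewN 4).mkQ.comp (Bmap p))
    rw [hdom] at h1
    have hker : LinearMap.ker ((SkewN 4).mkQ.comp (Bmap p)) = (SkewN 4).comap (Bmap p) := by
      rw [LinearMap.ker_comp, Submodule.ker_mkQ]
    have hrangef : LinearMap.range ((SkewN 4).mkQ.comp (Bmap p)) =
        Submodule.map (SkewN 4).mkQ (Psub p) := by
      rw [LinearMap.range_comp, range_Bmap]
    rw [hker, hrangef] at h1
    have h2 := LinearMap.finrank_range_add_finrank_ker ((SkewN 4).mkQ.comp (Psub p).subtype)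
    have hrg : LinearMap.range ((SkewN 4).mkQ.comp (Psub p).subtype) =
        Submodule.map (SkewN 4).mkQ (Psub p) := by
      rw [LinearMap.range_comp, Submodule.range_subtype]
    have hkg : LinearMap.ker ((SkewN 4).mkQ.comp (Psub p).subtype) =
        Submodule.comap (Psub p).subtype (Psub p ⊓ SkewN 4) := by
      rw [LinearMap.ker_comp, Submodule.ker_mkQ]
      ext x
      simp only [Submodule.mem_comap, Submodule.mem_inf]
      exact ⟨fun h => ⟨x.2, h⟩, fun h => h.2⟩
    rw [hrg, hkg] at h2
    have h3 : finrank ℝ (Submodule.comap (Psub p).subtype (Psub p ⊓ SkewN 4)) =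
        finrank ℝ (Psub p ⊓ SkewN 4 : Submodule ℝ (Matrix (Fin 4) (Fin 4) ℝ)) :=
      LinearEquiv.finrank_eq (Submodule.comapSubtypeEquivOfLe inf_le_left)
    have h4 : finrank ℝ (Harm (⊤ : SimpleGraph (Fin 4)) p) =
        finrank ℝ ((SkewN 4).comap (Bmap p)) := by rw [harm_eq_comap]
    omega
  have hp3 : finrank ℝ (Psub p) = 3 * finrank ℝ (Usub p) := finrank_Psub p
  have hrk := rank_C_harm p C hC
  refine ⟨fun h1 => ?_, fun h2 => ?_, fun h3 => ?_⟩
  · have hU1 : finrank ℝ (Usub p) = 1 := by omega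
    have hinf := finrank_inf p hU1
    have hsk : finrank ℝ (SkewN 1) = 0 := by rw [finrank_SkewN]; decide
    have hH : finrank ℝ (Harm (⊤ : SimpleGraph (Fin 4)) p) = 9 := by omega
    exact ⟨by omega, hH⟩
  · have hU1 : finrank ℝ (Usub p) = 2 := by omega
    have hinf := finrank_inf p hU1
    have hsk : finrank ℝ (SkewN 2) = 1 := by rw [finrank_SkewN]; decide
    have hH : finrank ℝ (Harm (⊤ : SimpleGraph (Fin 4)) p) = 7 := by omega
    exact ⟨by omega, hH⟩
  · have hU1 : finrank ℝ (Usub p) = 3 := by omega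
    have hinf := finrank_inf p hU1
    have hsk : finrank ℝ (SkewN 3) = 3 := by rw [finrank_SkewN]; decide
    have hH : finrank ℝ (Harm (⊤ : SimpleGraph (Fin 4)) p) = 6 := by omega
    exact ⟨by omega, hH⟩
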